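/- arXiv:math/0501340 — 2 statements merged into one kernel-verified Lean document; each statement's English description precedes it below -/
import Mathlib

section
/- Let P be a poset and let U be a D-closed subset of P. Then the binary relation θ_U on Co(P), defined by X ≡ Y (mod θ_U) iff X ∪ U = Y ∪ U, is a complete lattice congruence on Co(P), and the map h_U : Co(P) → Co(P ∖ U) (where P ∖ U carries the induced order) given by h_U(X) = X ∖ U is a surjective lattice homomorphism whose kernel is θ_U. Moreover, every complete lattice congruence θ of Co(P) equals θ_U for the D-closed set U = {p ∈ P : {p} ≡ ∅ (mod θ)}. -/
/-! Common definitions: lattices of order-convex subsets of a poset,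
length of a poset, the identities (S), (U), (B), (L2), (H_n), (H_{m,n}),
join-irreducibility, the join-dependency relation, join-seeds,
the posets P_{I,J}, tree-like posets, D-closed sets,
and complete lattice congruences. -/

open Set

/-- The lattice `Co P` of all order-convex subsets of a poset `P`. -/
def Co (P : Type*) [PartialOrder P] : Type _ := {s : Set P // s.OrdConnected}

namespace Co

variable {P : Type*} [PartialOrder P]

instance : PartialOrder (Co P) := Subtype.partialOrder _

instance : InfSet (Co P) :=
  ⟨fun S => ⟨⋂ s ∈ S, s.1, Set.ordConnected_biInter fun s _ => s.2⟩⟩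

noncomputable instance : CompleteLattice (Co P) :=
  completeLatticeOfInf (Co P) (by
    intro S
    constructor
    · intro t ht
      exact Set.biInter_subset_of_mem (t := fun s => s.1) ht
    · intro b hb
      exact Set.subset_iInter₂ fun t ht => hb ht)

/-- The order-convex subset of `P` with underlying set `X`. -/
def mk' (X : Set P) (hX : X.OrdConnected) : Co P := ⟨X, hX⟩

/-- The singleton `{p}`, as an order-convex set. -/
def sngl (p : P) : Co P := ⟨{p}, Set.ordConnected_singleton⟩

/-- The empty order-convex set. -/
def emp : Co P := ⟨∅, Set.ordConnected_empty⟩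

end Co

/-- `lengthLE P n` states that the poset `P` has length at most `n`, that is,
every finite chain of `P` has at most `n + 1` elements. -/
def lengthLE (P : Type*) [PartialOrder P] (n : ℕ) : Prop :=
  ∀ C : Finset P, IsChain (· ≤ ·) (C : Set P) → C.card ≤ n + 1

section Identities

/-- The Stirlitz identity (S). -/
def IdS (L : Type*) [Lattice L] : Prop :=
  ∀ a b b₀ b₁ c : L,
    a ⊓ ((b ⊓ (b₀ ⊔ b₁)) ⊔ c) =
      (a ⊓ (b ⊓ (b₀ ⊔ b₁)))
      ⊔ (a ⊓ (b₀ ⊔ c) ⊓ ((b ⊓ (b₀ ⊔ b₁) ⊓ (a ⊔ b₀)) ⊔ c))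
      ⊔ (a ⊓ (b₁ ⊔ c) ⊓ ((b ⊓ (b₀ ⊔ b₁) ⊓ (a ⊔ b₁)) ⊔ c))

/-- The Udav identity (U). -/
def IdU (L : Type*) [Lattice L] : Prop :=
  ∀ x x₀ x₁ x₂ : L,
    x ⊓ (x₀ ⊔ x₁) ⊓ (x₁ ⊔ x₂) ⊓ (x₀ ⊔ x₂) =
      (x ⊓ x₀ ⊓ (x₁ ⊔ x₂)) ⊔ (x ⊓ x₁ ⊓ (x₀ ⊔ x₂)) ⊔ (x ⊓ x₂ ⊓ (x₀ ⊔ x₁))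

/-- The Bond identity (B). -/
def IdB (L : Type*) [Lattice L] : Prop :=
  ∀ x a₀ a₁ b₀ b₁ : L,
    x ⊓ (a₀ ⊔ a₁) ⊓ (b₀ ⊔ b₁) =
      (x ⊓ a₀ ⊓ (b₀ ⊔ b₁)) ⊔ (x ⊓ a₁ ⊓ (b₀ ⊔ b₁))
      ⊔ (x ⊓ b₀ ⊓ (a₀ ⊔ a₁)) ⊔ (x ⊓ b₁ ⊓ (a₀ ⊔ a₁))
      ⊔ (x ⊓ (a₀ ⊔ a₁) ⊓ (b₀ ⊔ b₁) ⊓ (a₀ ⊔ b₀) ⊓ (a₁ ⊔ b₁))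
      ⊔ (x ⊓ (a₀ ⊔ a₁) ⊓ (b₀ ⊔ b₁) ⊓ (a₀ ⊔ b₁) ⊓ (a₁ ⊔ b₀))

/-- The identity (L₂). -/
def IdL2 (L : Type*) [Lattice L] : Prop :=
  ∀ a b b' c c' : L,
    a ⊓ ((b ⊓ (c ⊔ c')) ⊔ b') =
      (a ⊓ b ⊓ (c ⊔ c')) ⊔ (a ⊓ ((b ⊓ c) ⊔ b')) ⊔ (a ⊓ ((b ⊓ c') ⊔ b'))

variable {L : Type*} [Lattice L]

/-- The lattice polynomial `U_{i,n}` (in the variables `x₀, …, xₙ, x'₁, …, x'ₙ`). -/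
def Upoly (x x' : ℕ → L) (n : ℕ) (i : ℕ) : L :=
  if h : n ≤ i then x n
  else x i ⊓ (Upoly x x' n (i + 1) ⊔ x' (i + 1))
  termination_by n - i
  decreasing_by omega

/-- The lattice polynomial `V_{i,j,n}`. -/
def Vpoly (x x' : ℕ → L) (n i : ℕ) (j : ℕ) : L :=
  if h : i ≤ j then (x i ⊓ Upoly x x' n (i + 1)) ⊔ (x i ⊓ x' (i + 1))
  else x j ⊓ (Vpoly x x' n i (j + 1) ⊔ x' (j + 1))
  termination_by i - j
  decreasing_by omega

/-- The lattice polynomial `W_{i,j,n}`. -/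
def Wpoly (x x' : ℕ → L) (n i : ℕ) (j : ℕ) : L :=
  if h : i ≤ j then
    x i ⊓ (x' (i + 1) ⊔ x' (i + 2)) ⊓ ((Upoly x x' n (i + 1) ⊓ (x i ⊔ x' (i + 2))) ⊔ x' (i + 1))
  else x j ⊓ (Wpoly x x' n i (j + 1) ⊔ x' (j + 1))
  termination_by i - j
  decreasing_by omega

/-- `bigJoin f k = f 0 ⊔ f 1 ⊔ ⋯ ⊔ f k`. -/
def bigJoin (f : ℕ → L) : ℕ → L
  | 0 => f 0
  | k + 1 => bigJoin f k ⊔ f (k + 1)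

end Identities

/-- The identity (Hₙ) : `Uₙ = ⋁_{0 ≤ i ≤ n-1} V_{i,n} ∨ ⋁_{0 ≤ i ≤ n-2} W_{i,n}`
(intended for `n ≥ 1`). -/
def IdH (n : ℕ) (L : Type*) [Lattice L] : Prop :=
  ∀ x x' : ℕ → L,
    Upoly x x' n 0 =
      bigJoin (fun i =>
        if i + 2 ≤ n then Vpoly x x' n i 0 ⊔ Wpoly x x' n i 0 else Vpoly x x' n i 0) (n - 1)

/-- The identity (H_{m,n}) (intended for `m, n ≥ 1`); the common base point is
`x 0 = y 0 = t`. -/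
def IdHmn (m n : ℕ) (L : Type*) [Lattice L] : Prop :=
  ∀ x x' y y' : ℕ → L, x 0 = y 0 →
    Upoly x x' m 0 ⊓ Upoly y y' n 0 =
      bigJoin (fun i =>
          if i + 2 ≤ m then
            (Vpoly x x' m i 0 ⊓ Upoly y y' n 0) ⊔ (Wpoly x x' m i 0 ⊓ Upoly y y' n 0)
          else Vpoly x x' m i 0 ⊓ Upoly y y' n 0) (m - 1)
      ⊔ bigJoin (fun j =>
          if j + 2 ≤ n then
            (Upoly x x' m 0 ⊓ Vpoly y y' n j 0) ⊔ (Upoly x x' m 0 ⊓ Wpoly y y' n j 0)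
          else Upoly x x' m 0 ⊓ Vpoly y y' n j 0) (n - 1)
      ⊔ (Upoly x x' m 0 ⊓ Upoly y y' n 0 ⊓ (x 1 ⊔ y' 1) ⊓ (x' 1 ⊔ y 1))

/-- `p` is join-irreducible: `p = x ⊔ y` implies `p = x` or `p = y`. -/
def JIrr {L : Type*} [Lattice L] (p : L) : Prop :=
  ∀ x y : L, p = x ⊔ y → p = x ∨ p = y

/-- The join-dependency relation `p D q`. -/
def DRel {L : Type*} [Lattice L] (p q : L) : Prop :=
  p ≠ q ∧ ∃ x : L, p ≤ q ⊔ x ∧ ∀ y < q, ¬ p ≤ y ⊔ x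

/-- A subset `S` of a lattice `L` is a join-seed. -/
def JoinSeed (L : Type*) [Lattice L] (S : Set L) : Prop :=
  (∀ p ∈ S, JIrr p) ∧
  (∀ a : L, ∃ T ⊆ S, IsLUB T a) ∧
  (∀ p ∈ S, ∀ a b : L, p ≤ a ⊔ b → ¬ p ≤ a → ¬ p ≤ b →
    ∃ x ∈ S, ∃ y ∈ S, x ≤ a ∧ y ≤ b ∧ p ≤ x ⊔ y ∧
      (∀ x' < x, ¬ p ≤ x' ⊔ y) ∧ (∀ y' < y, ¬ p ≤ x ⊔ y'))

/-- The poset `P_{I,J} = I ∪ {p} ∪ J`, where every element of `I` is below `p`,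
`p` is below every element of `J`, every element of `I` is below every element
of `J`, and there are no other strict comparabilities. -/
def PIJ (I J : Type*) : Type _ := I ⊕ (Unit ⊕ J)

namespace PIJ

variable {I J : Type*}

/-- The rank (height) of an element of `P_{I,J}`. -/
def rank (a : PIJ I J) : ℕ :=
  Sum.elim (fun _ => 0) (Sum.elim (fun _ => 1) fun _ => 2) a

instance : PartialOrder (PIJ I J) where
  le a b := a = b ∨ rank a < rank b
  le_refl a := Or.inl rfl
  le_trans a b c hab hbc := by
    rcases hab with rfl | h
    · exact hbc
    · rcases hbc with rfl | h'
      · exact Or.inr h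
      · exact Or.inr (h.trans h')
  le_antisymm a b hab hba := by
    rcases hab with rfl | h
    · rfl
    · rcases hba with rfl | h'
      · rfl
      · omega

end PIJ

/-- A poset is tree-like if it has no infinite bounded chain and between any two
points there is at most one repetition-free finite path with respect to the
covering relation. -/
def TreeLike (P : Type*) [PartialOrder P] : Prop :=
  (∀ C : Set P, IsChain (· ≤ ·) C → BddAbove C → BddBelow C → C.Finite) ∧
  (∀ a b : P, ∀ l₁ l₂ : List P,
    l₁.Nodup → l₁.head? = some a → l₁.getLast? = some b →
      l₁.Chain' (fun u v => u ⋖ v ∨ v ⋖ u) →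
    l₂.Nodup → l₂.head? = some a → l₂.getLast? = some b →
      l₂.Chain' (fun u v => u ⋖ v ∨ v ⋖ u) →
    l₁ = l₂)

/-- A subset `U` of a poset `P` is `D`-closed. -/
def DClosed {P : Type*} [PartialOrder P] (U : Set P) : Prop :=
  ∀ x p y : P, x < p → p < y → (x ∈ U ∨ y ∈ U) → p ∈ U

/-- A complete congruence of a complete lattice. -/
structure IsCompleteCongr {L : Type*} [CompleteLattice L] (θ : L → L → Prop) : Prop where
  refl : ∀ x, θ x x
  symm : ∀ {x y}, θ x y → θ y x
  trans : ∀ {x y z}, θ x y → θ y z → θ x z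
  sup : ∀ {a b c d}, θ a b → θ c d → θ (a ⊔ c) (b ⊔ d)
  inf : ∀ {a b c d}, θ a b → θ c d → θ (a ⊓ c) (b ⊓ d)
  cSup : ∀ (x : L) (Y : Set L), Y.Nonempty → (∀ y ∈ Y, θ x y) → θ x (sSup Y)
  cInf : ∀ (x : L) (Y : Set L), Y.Nonempty → (∀ y ∈ Y, θ x y) → θ x (sInf Y)

/-- The map `h_U : Co(P) → Co(P ∖ U)`, `X ↦ X ∖ U`. -/
def coRestrict {P : Type*} [PartialOrder P] (U : Set P) (X : Co P) :
    Co {p : P // p ∉ U} :=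
  ⟨Subtype.val ⁻¹' X.1, by
    constructor
    rintro a ha b hb z hz
    exact X.2.out ha hb ⟨hz.1, hz.2⟩⟩

/-- The lattice `D(P)` of all `D`-closed subsets of a poset `P`. -/
def DSub (P : Type*) [PartialOrder P] : Type _ := {U : Set P // DClosed U}

namespace DSub

variable {P : Type*} [PartialOrder P]

instance : PartialOrder (DSub P) := Subtype.partialOrder _

instance : InfSet (DSub P) :=
  ⟨fun S => ⟨⋂ U ∈ S, U.1, by
    intro x p y h1 h2 h3
    simp only [Set.mem_iInter] at h3 ⊢
    intro U hU
    exact U.2 x p y h1 h2 (h3.imp (fun h => h U hU) fun h => h U hU)⟩⟩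

noncomputable instance : CompleteLattice (DSub P) :=
  completeLatticeOfInf (DSub P) (by
    intro S
    constructor
    · intro t ht
      exact Set.biInter_subset_of_mem (t := fun U => U.1) ht
    · intro b hb
      exact Set.subset_iInter₂ fun t ht => hb ht)

end DSub

/-! A point `p ∉ U` lying between two points of an order-convex set can be squeezed between
two such points outside `U`: if the lower one `x` lies in `U`, then `x < p`, and `p < y` would
force `p ∈ U` by `D`-closedness, so `p = y`. Hence `X ↦ X ∖ U` commutes with arbitrary joins,
and `θ_U` is the kernel of a complete lattice homomorphism.

Conversely, meeting a congruence `X ≡ Z` with `{p}` gives `{p} ≡ ∅` for every `p ∈ X ∖ Z`;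
and when `Z ⊆ X` with `X ∖ Z` collapsed, `X` is the join of the sets `Z ∪ {p}`, each
congruent to `Z`, so completeness gives `X ≡ Z`. -/

namespace Co

variable {P : Type*} [PartialOrder P]

def hull (S : Set P) : Set P := {z | ∃ x ∈ S, ∃ y ∈ S, x ≤ z ∧ z ≤ y}

lemma subset_hull (S : Set P) : S ⊆ hull S :=
  fun z hz => ⟨z, hz, z, hz, le_rfl, le_rfl⟩

lemma ordConnected_hull (S : Set P) : (hull S).OrdConnected := by
  constructor
  rintro _ ⟨x, hx, _, _, hxa, _⟩ _ ⟨_, _, y, hy, _, hby⟩ _ hz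
  exact ⟨x, hx, y, hy, hxa.trans hz.1, hz.2.trans hby⟩

@[ext]
lemma ext {X Y : Co P} (h : X.1 = Y.1) : X = Y := Subtype.ext h

lemma coe_sInf (S : Set (Co P)) : (sInf S).1 = ⋂ s ∈ S, s.1 := rfl

lemma coe_inf (X Y : Co P) : (X ⊓ Y).1 = X.1 ∩ Y.1 := by
  rw [← sInf_pair, coe_sInf, biInter_pair]

lemma coe_sSup (S : Set (Co P)) : (sSup S).1 = hull (⋃ s ∈ S, s.1) := by
  let H : Co P := ⟨hull (⋃ s ∈ S, s.1), ordConnected_hull _⟩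
  refine Co.ext_iff.mp (le_antisymm (b := H) ?_ ?_)
  · exact sSup_le fun s hs => (subset_biUnion_of_mem hs).trans (subset_hull _)
  · rintro z ⟨x, hx, y, hy, hxz, hzy⟩
    obtain ⟨s, hs, hxs⟩ := mem_iUnion₂.mp hx
    obtain ⟨t, ht, hyt⟩ := mem_iUnion₂.mp hy
    exact (sSup S).2.out (le_sSup hs hxs) (le_sSup ht hyt) ⟨hxz, hzy⟩

lemma emp_eq_bot : (emp : Co P) = ⊥ := bot_unique (empty_subset _)

lemma sngl_le_iff {p : P} {X : Co P} : sngl p ≤ X ↔ p ∈ X.1 := singleton_subset_iff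

lemma inf_sngl_of_mem {X : Co P} {p : P} (hp : p ∈ X.1) : X ⊓ sngl p = sngl p :=
  inf_eq_right.mpr (sngl_le_iff.mpr hp)

lemma inf_sngl_of_notMem {X : Co P} {p : P} (hp : p ∉ X.1) : X ⊓ sngl p = emp :=
  Co.ext <| by rw [coe_inf]; exact inter_singleton_eq_empty.mpr hp

end Co

open Co

section coRestrict

variable {P : Type*} [PartialOrder P] {U : Set P}

lemma DClosed.preimage_hull (hU : DClosed U) (T : Set P) :
    ((↑) : {p // p ∉ U} → P) ⁻¹' hull T = hull ((↑) ⁻¹' T) := by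
  ext ⟨p, hp⟩
  constructor
  · rintro ⟨x, hx, y, hy, hxp, hpy⟩
    by_cases hxU : x ∈ U
    · have hpy : p = y := by
        by_contra hne
        exact hp (hU x p y (hxp.lt_of_ne (ne_of_mem_of_not_mem hxU hp)) (hpy.lt_of_ne hne)
          (.inl hxU))
      subst hpy
      exact subset_hull _ hy
    by_cases hyU : y ∈ U
    · have hxp : x = p := by
        by_contra hne
        exact hp (hU x p y (hxp.lt_of_ne hne) (hpy.lt_of_ne (ne_of_mem_of_not_mem hyU hp).symm)
          (.inr hyU))
      subst hxp
      exact subset_hull _ hx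
    exact ⟨⟨x, hxU⟩, hx, ⟨y, hyU⟩, hy, hxp, hpy⟩
  · rintro ⟨x, hx, y, hy, hxp, hpy⟩
    exact ⟨x, hx, y, hy, hxp, hpy⟩

variable (U)

lemma coe_coRestrict (X : Co P) : (coRestrict U X).1 = (↑) ⁻¹' X.1 := rfl

lemma coRestrict_eq_iff {X Y : Co P} :
    coRestrict U X = coRestrict U Y ↔ X.1 ∪ U = Y.1 ∪ U := by
  rw [Co.ext_iff, coe_coRestrict, coe_coRestrict, Set.ext_iff, Set.ext_iff]
  constructor
  · intro h p
    by_cases hp : p ∈ U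
    · simp [hp]
    · simpa [hp] using h ⟨p, hp⟩
  · rintro h ⟨p, hp⟩
    simpa [hp] using h p

lemma coRestrict_sInf (S : Set (Co P)) : coRestrict U (sInf S) = sInf (coRestrict U '' S) :=
  Co.ext <| by
    rw [coe_coRestrict, coe_sInf, coe_sInf, preimage_iInter₂, biInter_image]
    rfl

lemma coRestrict_sSup (hU : DClosed U) (S : Set (Co P)) :
    coRestrict U (sSup S) = sSup (coRestrict U '' S) :=
  Co.ext <| by
    rw [coe_coRestrict, coe_sSup, coe_sSup, hU.preimage_hull, preimage_iUnion₂, biUnion_image]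
    rfl

lemma coRestrict_surjective : Function.Surjective (coRestrict U : Co P → Co {p // p ∉ U}) := by
  refine fun V => ⟨⟨hull ((↑) '' V.1), ordConnected_hull _⟩, Co.ext ?_⟩
  refine (Subset.antisymm ?_ fun p hp => subset_hull _ ⟨p, hp, rfl⟩)
  rintro p ⟨_, ⟨a, ha, rfl⟩, _, ⟨b, hb, rfl⟩, hap, hpb⟩
  exact V.2.out ha hb ⟨hap, hpb⟩

variable {U} in
def DClosed.coRestrictHom (hU : DClosed U) : CompleteLatticeHom (Co P) (Co {p // p ∉ U}) where
  toFun := coRestrict U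
  map_sInf' := coRestrict_sInf U
  map_sSup' := coRestrict_sSup U hU

end coRestrict

lemma CompleteLatticeHom.isCompleteCongr_ker {L M : Type*} [CompleteLattice L]
    [CompleteLattice M] (f : CompleteLatticeHom L M) : IsCompleteCongr (fun x y => f x = f y) := by
  have image_eq {x : L} {Y : Set L} (hY : Y.Nonempty) (h : ∀ y ∈ Y, f x = f y) :
      f '' Y = {f x} := by
    rw [image_congr fun y hy => (h y hy).symm, hY.image_const]
  exact
    { refl := fun _ => rfl
      symm := Eq.symm
      trans := Eq.trans
      sup := fun hab hcd => by simp only [map_sup, hab, hcd]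
      inf := fun hab hcd => by simp only [map_inf, hab, hcd]
      cSup := fun x Y hY h => by rw [map_sSup, image_eq hY h, sSup_singleton]
      cInf := fun x Y hY h => by rw [map_sInf, image_eq hY h, sInf_singleton] }

namespace IsCompleteCongr

lemma iff_inf {L : Type*} [CompleteLattice L] {θ : L → L → Prop} (hθ : IsCompleteCongr θ)
    {x y : L} : θ x y ↔ θ x (x ⊓ y) ∧ θ y (x ⊓ y) := by
  refine ⟨fun h => ⟨?_, ?_⟩, fun ⟨hx, hy⟩ => hθ.trans hx (hθ.symm hy)⟩
  · simpa only [inf_idem] using hθ.inf (hθ.refl x) h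
  · simpa only [inf_idem] using hθ.symm (hθ.inf h (hθ.refl y))

variable {P : Type*} [PartialOrder P] {θ : Co P → Co P → Prop}

def collapsed (θ : Co P → Co P → Prop) : Set P := {p | θ (sngl p) emp}

variable (hθ : IsCompleteCongr θ)
include hθ

lemma mem_collapsed {X Z : Co P} (h : θ X Z) {p : P} (hpX : p ∈ X.1) (hpZ : p ∉ Z.1) :
    p ∈ collapsed θ := by
  simpa only [collapsed, mem_ofPred_eq, inf_sngl_of_mem hpX, inf_sngl_of_notMem hpZ]
    using hθ.inf h (hθ.refl (sngl p))

lemma of_diff_subset_collapsed {X Z : Co P} (hZX : Z ≤ X) (h : X.1 \ Z.1 ⊆ collapsed θ) :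
    θ X Z := by
  set S : Set (Co P) := insert Z ((Z ⊔ sngl ·) '' (X.1 \ Z.1))
  have hS : ∀ v ∈ S, θ Z v := forall_mem_insert.mpr ⟨hθ.refl Z, forall_mem_image.mpr
    fun p hp => by
      simpa only [emp_eq_bot, sup_bot_eq] using hθ.symm (hθ.sup (hθ.refl Z) (h hp))⟩
  have hSX : sSup S = X := by
    refine le_antisymm (sSup_le ?_) fun q hq => ?_
    · exact forall_mem_insert.mpr ⟨hZX, forall_mem_image.mpr
        fun p hp => sup_le hZX (sngl_le_iff.mpr hp.1)⟩
    by_cases hqZ : q ∈ Z.1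
    · exact le_sSup (mem_insert Z _) hqZ
    · have hqS : Z ⊔ sngl q ∈ S := mem_insert_of_mem Z ⟨q, ⟨hq, hqZ⟩, rfl⟩
      exact le_sSup hqS (le_sup_right (a := Z) (b := sngl q) (mem_singleton q))
  exact hθ.symm (hSX ▸ hθ.cSup Z S (insert_nonempty _ _) hS)

lemma iff_diff_subset_collapsed {X Z : Co P} (hZX : Z ≤ X) :
    θ X Z ↔ X.1 \ Z.1 ⊆ collapsed θ :=
  ⟨fun h _ hp => hθ.mem_collapsed h hp.1 hp.2, hθ.of_diff_subset_collapsed hZX⟩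

lemma dClosed_collapsed : DClosed (collapsed θ) := by
  intro x p y hxp hpy hxy
  have hp : p ∈ (sngl x ⊔ sngl y).1 :=
    (sngl x ⊔ sngl y).2.out (le_sup_left (a := sngl x) rfl) (le_sup_right (a := sngl x) rfl)
      ⟨hxp.le, hpy.le⟩
  rcases hxy with hx | hy
  · have h := hθ.sup hx (hθ.refl (sngl y))
    rw [emp_eq_bot, bot_sup_eq] at h
    exact hθ.mem_collapsed h hp hpy.ne
  · have h := hθ.sup (hθ.refl (sngl x)) hy
    rw [emp_eq_bot, sup_bot_eq] at h
    exact hθ.mem_collapsed h hp hxp.ne'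

lemma iff_union_collapsed {X Y : Co P} :
    θ X Y ↔ X.1 ∪ collapsed θ = Y.1 ∪ collapsed θ := by
  rw [hθ.iff_inf, hθ.iff_diff_subset_collapsed inf_le_left,
    hθ.iff_diff_subset_collapsed inf_le_right, coe_inf, sdiff_self_inter, inter_comm,
    sdiff_self_inter, sdiff_subset_iff, sdiff_subset_iff, union_eq_union_iff_right]

end IsCompleteCongr

theorem stmt14 (P : Type*) [PartialOrder P] (U : Set P) (hU : DClosed U) :
    IsCompleteCongr (fun X Y : Co P => X.1 ∪ U = Y.1 ∪ U) ∧
    (∀ X Y : Co P, coRestrict U (X ⊔ Y) = coRestrict U X ⊔ coRestrict U Y) ∧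
    (∀ X Y : Co P, coRestrict U (X ⊓ Y) = coRestrict U X ⊓ coRestrict U Y) ∧
    Function.Surjective (coRestrict U : Co P → Co {p : P // p ∉ U}) ∧
    (∀ X Y : Co P, X.1 ∪ U = Y.1 ∪ U ↔ coRestrict U X = coRestrict U Y) ∧
    (∀ θ : Co P → Co P → Prop, IsCompleteCongr θ →
      DClosed {p : P | θ (Co.sngl p) Co.emp} ∧
      ∀ X Y : Co P, θ X Y ↔
        X.1 ∪ {p : P | θ (Co.sngl p) Co.emp} = Y.1 ∪ {p : P | θ (Co.sngl p) Co.emp}) := by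
  have hker : (fun X Y : Co P => X.1 ∪ U = Y.1 ∪ U) =
      fun X Y => hU.coRestrictHom X = hU.coRestrictHom Y := by
    ext X Y
    exact (coRestrict_eq_iff U).symm
  exact ⟨hker ▸ hU.coRestrictHom.isCompleteCongr_ker, map_sup hU.coRestrictHom,
    map_inf hU.coRestrictHom, coRestrict_surjective U, fun X Y => (coRestrict_eq_iff U).symm,
    fun θ hθ => ⟨hθ.dClosed_collapsed, fun X Y => hθ.iff_union_collapsed⟩⟩
end

section
/- For every poset P and every positive integer n, the lattice Co(P) satisfies the identity (H_n) if and only if lh(P) ≤ n. -/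
/-! Common definitions: lattices of order-convex subsets of a poset,
length of a poset, the identities (S), (U), (B), (L2), (H_n), (H_{m,n}),
join-irreducibility, the join-dependency relation, join-seeds,
the posets P_{I,J}, tree-like posets, D-closed sets,
and complete lattice congruences. -/

open Set

/-! Every `V_{i,j,n}` and `W_{i,j,n}` obeys the recursion `T_j = x_j ∧ (T_{j+1} ∨ x'_{j+1})` of
`U_{j,n}`, starting at `j = i` from a value below `U_{i,n}`; hence the right-hand side of (Hₙ)
lies below `Uₙ` in every lattice.

In `Co(P)` a point of `x_j ∧ (Y ∨ x'_{j+1})` is a point of `x_j` lying between a point of `Y` and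
a point of `x'_{j+1}`. So a point `u₀ ∈ Uₙ` starts a walk with `u_j ∈ U_{j,n}` lying strictly
between `u_{j+1} ∈ U_{j+1,n}` and some `b_{j+1} ∈ x'_{j+1}`. While the walk keeps its direction,
`u_{j+1} < u_j < ⋯ < u₀ < b₁` (or the dual chain) has `j + 3` elements, so if `lh(P) ≤ n` the
walk stops before reaching `U_{n,n}`: either `u_j ∈ U_{j+1,n} ∪ x'_{j+1}`, which puts `u_j` in
`V_{j,j,n}`, or the direction turns, which puts `u_{j-1}` in `W_{j-1,j-1,n}`. Walking back down
then puts `u₀` in `V_{j,n}` or in `W_{j-1,n}`.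

Conversely, for a chain `p₀ < ⋯ < p_{n+1}` the values `x_j = {p_{n-j}}` and `x'_j = {p_{n+1}}`
give `Uₙ = {pₙ}`, while every `V_{i,n}` and `W_{i,n}` is empty. -/

section LatticePolynomials

variable {L : Type*} [Lattice L] {x x' : ℕ → L} {n i j : ℕ}

theorem Upoly_of_le (h : n ≤ i) : Upoly x x' n i = x n := by
  rw [Upoly, dif_pos h]

theorem Upoly_of_lt (h : i < n) : Upoly x x' n i = x i ⊓ (Upoly x x' n (i + 1) ⊔ x' (i + 1)) := by
  rw [Upoly, dif_neg h.not_ge]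

theorem Vpoly_self : Vpoly x x' n i i = x i ⊓ Upoly x x' n (i + 1) ⊔ x i ⊓ x' (i + 1) := by
  rw [Vpoly, dif_pos le_rfl]

theorem Vpoly_of_lt (h : j < i) :
    Vpoly x x' n i j = x j ⊓ (Vpoly x x' n i (j + 1) ⊔ x' (j + 1)) := by
  rw [Vpoly, dif_neg h.not_ge]

theorem Wpoly_self : Wpoly x x' n i i =
    x i ⊓ (x' (i + 1) ⊔ x' (i + 2)) ⊓ (Upoly x x' n (i + 1) ⊓ (x i ⊔ x' (i + 2)) ⊔ x' (i + 1)) := by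
  rw [Wpoly, dif_pos le_rfl]

theorem Wpoly_of_lt (h : j < i) :
    Wpoly x x' n i j = x j ⊓ (Wpoly x x' n i (j + 1) ⊔ x' (j + 1)) := by
  rw [Wpoly, dif_neg h.not_ge]

theorem Upoly_le (h : i ≤ n) : Upoly x x' n i ≤ x i := by
  rcases h.lt_or_eq with h | rfl
  · rw [Upoly_of_lt h]
    exact inf_le_left
  · rw [Upoly_of_le le_rfl]

theorem Upoly_eq_self (hx : ∀ j < n, x j ≤ x (j + 1) ⊔ x' (j + 1)) (h : i ≤ n) :
    Upoly x x' n i = x i := by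
  induction h using Nat.decreasingInduction with
  | self => exact Upoly_of_le le_rfl
  | of_succ j hj ih => rw [Upoly_of_lt hj, ih, inf_eq_left.2 (hx j hj)]

theorem le_of_le_recursion {T S : ℕ → L}
    (hT : ∀ j < i, T j ≤ x j ⊓ (T (j + 1) ⊔ x' (j + 1)))
    (hS : ∀ j < i, x j ⊓ (S (j + 1) ⊔ x' (j + 1)) ≤ S j) (hi : T i ≤ S i) : T 0 ≤ S 0 :=
  Nat.decreasingInduction (motive := fun j _ => T j ≤ S j)
    (fun j hj ih => (hT j hj).trans ((inf_le_inf_left _ (sup_le_sup_right ih _)).trans (hS j hj)))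
    hi i.zero_le

theorem bigJoin_le_iff {f : ℕ → L} {m : ℕ} {a : L} : bigJoin f m ≤ a ↔ ∀ k ≤ m, f k ≤ a := by
  induction m with
  | zero => simp [bigJoin]
  | succ m ih => simp [bigJoin, ih, Nat.le_succ_iff, or_imp, forall_and]

variable (x x')

/-- The right-hand side of (Hₙ). -/
def rhsH (n : ℕ) : L :=
  bigJoin (fun i =>
    if i + 2 ≤ n then Vpoly x x' n i 0 ⊔ Wpoly x x' n i 0 else Vpoly x x' n i 0) (n - 1)

/-- The polynomials `V_{k,j,n}` and `W_{k,j,n}` at depth `j`; those at depth `0` are the joinands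
of `rhsH`. -/
def rhsTerms (n j : ℕ) : Set L :=
  {t | ∃ k, j ≤ k ∧ (k < n ∧ t = Vpoly x x' n k j ∨ k + 2 ≤ n ∧ t = Wpoly x x' n k j)}

variable {x x'}

theorem Vpoly_self_mem_rhsTerms (h : i < n) : Vpoly x x' n i i ∈ rhsTerms x x' n i :=
  ⟨i, le_rfl, .inl ⟨h, rfl⟩⟩

theorem Wpoly_self_mem_rhsTerms (h : i + 2 ≤ n) : Wpoly x x' n i i ∈ rhsTerms x x' n i :=
  ⟨i, le_rfl, .inr ⟨h, rfl⟩⟩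

theorem inf_sup_mem_rhsTerms {t : L} (ht : t ∈ rhsTerms x x' n (j + 1)) :
    x j ⊓ (t ⊔ x' (j + 1)) ∈ rhsTerms x x' n j := by
  obtain ⟨k, hk, ⟨hkn, rfl⟩ | ⟨hkn, rfl⟩⟩ := ht
  · exact ⟨k, by omega, .inl ⟨hkn, (Vpoly_of_lt (by omega)).symm⟩⟩
  · exact ⟨k, by omega, .inr ⟨hkn, (Wpoly_of_lt (by omega)).symm⟩⟩

theorem isLUB_rhsTerms (hn : 0 < n) : IsLUB (rhsTerms x x' n 0) (rhsH x x' n) := by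
  constructor
  · rintro t ⟨k, -, ⟨hk, rfl⟩ | ⟨hk, rfl⟩⟩ <;>
      refine le_trans ?_ (bigJoin_le_iff.1 le_rfl k (by omega))
    · split_ifs
      exacts [le_sup_left, le_rfl]
    · rw [if_pos hk]
      exact le_sup_right
  · intro a ha
    refine bigJoin_le_iff.2 fun k hk => ?_
    have hV : Vpoly x x' n k 0 ≤ a := ha ⟨k, k.zero_le, .inl ⟨by omega, rfl⟩⟩
    split_ifs with hk2
    exacts [sup_le hV (ha ⟨k, k.zero_le, .inr ⟨hk2, rfl⟩⟩), hV]

theorem le_of_mem_rhsTerms {S : ℕ → L} (hS : ∀ j < n, x j ⊓ (S (j + 1) ⊔ x' (j + 1)) ≤ S j)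
    (hV : ∀ k < n, Vpoly x x' n k k ≤ S k) (hW : ∀ k, k + 2 ≤ n → Wpoly x x' n k k ≤ S k)
    {t : L} (ht : t ∈ rhsTerms x x' n 0) : t ≤ S 0 := by
  obtain ⟨k, -, ⟨hk, rfl⟩ | ⟨hk, rfl⟩⟩ := ht
  · exact le_of_le_recursion (T := Vpoly x x' n k) (fun j hj => (Vpoly_of_lt hj).le)
      (fun j hj => hS j (by omega)) (hV k hk)
  · exact le_of_le_recursion (T := Wpoly x x' n k) (fun j hj => (Wpoly_of_lt hj).le)
      (fun j hj => hS j (by omega)) (hW k hk)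

theorem rhsH_le_Upoly (hn : 0 < n) : rhsH x x' n ≤ Upoly x x' n 0 := by
  refine (isLUB_rhsTerms hn).2 fun t ht => le_of_mem_rhsTerms (fun j hj => (Upoly_of_lt hj).ge)
    (fun k hk => ?_) (fun k hk => ?_) ht
  · rw [Vpoly_self, Upoly_of_lt hk]
    exact sup_le (inf_le_inf_left _ le_sup_left) (inf_le_inf_left _ le_sup_right)
  · rw [Wpoly_self, Upoly_of_lt (i := k) (by omega)]
    exact inf_le_inf (inf_le_left (b := x' (k + 1) ⊔ x' (k + 2)))
      (sup_le_sup_right (inf_le_left (b := x k ⊔ x' (k + 2))) _)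

theorem rhsH_eq_bot [OrderBot L] (hn : 0 < n) (hxx : ∀ j < n, x j ⊓ x (j + 1) = ⊥)
    (hxx' : ∀ j < n, x j ⊓ (x' (j + 1) ⊔ x' (j + 2)) = ⊥) : rhsH x x' n = ⊥ := by
  refine le_bot_iff.1 <| (isLUB_rhsTerms hn).2 fun t ht =>
    le_of_mem_rhsTerms (S := fun _ => ⊥) (fun j hj => ?_) (fun k hk => ?_) (fun k hk => ?_) ht
  · rw [bot_sup_eq, ← hxx' j hj]
    exact inf_le_inf_left _ le_sup_left
  · rw [Vpoly_self]
    exact sup_le ((inf_le_inf_left _ (Upoly_le hk)).trans (hxx k hk).le)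
      ((inf_le_inf_left _ le_sup_left).trans (hxx' k hk).le)
  · rw [Wpoly_self, ← hxx' k (by omega)]
    exact inf_le_left

end LatticePolynomials

section Length

variable {P : Type*} [PartialOrder P] {n : ℕ}

theorem exists_LTSeries_of_isChain (C : Finset P) (hC : IsChain (· ≤ ·) (C : Set P))
    (hne : C.Nonempty) : ∃ p : LTSeries P, p.length + 1 = C.card ∧ p.head ∈ C := by
  classical
  induction C using Finset.strongInduction with
  | H C ih =>
  obtain ⟨m, hm, hmin⟩ := Finset.exists_minimal hne
  rcases (C.erase m).eq_empty_or_nonempty with he | he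
  · refine ⟨RelSeries.singleton _ m, ?_, hm⟩
    rw [← Finset.card_erase_add_one hm, he]
    rfl
  obtain ⟨p, hp, hhead⟩ := ih _ (Finset.erase_ssubset hm)
    (hC.mono (Finset.coe_subset.2 (Finset.erase_subset _ _))) he
  have hlt : m < p.head := by
    have hne : m ≠ p.head := (Finset.ne_of_mem_erase hhead).symm
    have hheadC : p.head ∈ C := Finset.mem_of_mem_erase hhead
    rcases hC hm hheadC hne with h | h
    · exact h.lt_of_ne hne
    · exact absurd (le_antisymm (hmin hheadC h) h) hne
  exact ⟨p.cons m hlt, by rw [RelSeries.cons_length, hp, Finset.card_erase_add_one hm], hm⟩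

theorem lengthLE_iff : lengthLE P n ↔ ∀ p : LTSeries P, p.length ≤ n := by
  classical
  constructor
  · intro h p
    have hchain : IsChain (· ≤ ·) ((Finset.univ.image p : Finset P) : Set P) := by
      rw [Finset.coe_image, Finset.coe_univ, Set.image_univ]
      exact p.strictMono.monotone.isChain_range
    have := h _ hchain
    rwa [Finset.card_image_of_injective _ p.strictMono.injective, Finset.card_univ,
      Fintype.card_fin, add_le_add_iff_right] at this
  · intro h C hC
    rcases C.eq_empty_or_nonempty with rfl | hne
    · simp
    obtain ⟨p, hp, -⟩ := exists_LTSeries_of_isChain C hC hne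
    have := h p
    omega

namespace lengthLE

theorem coheight_le (hP : lengthLE P n) (a : P) : Order.coheight a ≤ n :=
  Order.coheight_le fun p _ => by exact_mod_cast lengthLE_iff.1 hP p

theorem height_le (hP : lengthLE P n) (a : P) : Order.height a ≤ n :=
  Order.height_le fun p _ => by exact_mod_cast lengthLE_iff.1 hP p

theorem coheight_strictAnti (hP : lengthLE P n) : StrictAnti (Order.coheight : P → ℕ∞) :=
  fun _ b hab =>
    Order.coheight_strictAnti hab ((hP.coheight_le b).trans_lt (ENat.natCast_lt_top n))

theorem height_strictMono (hP : lengthLE P n) : StrictMono (Order.height : P → ℕ∞) :=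
  fun a _ hab =>
    Order.height_strictMono hab ((hP.height_le a).trans_lt (ENat.natCast_lt_top n))

end lengthLE

end Length

namespace Co

variable {P : Type*} [PartialOrder P] {X Y : Co P} {a b c z : P}

theorem le_iff_subset : X ≤ Y ↔ X.1 ⊆ Y.1 := Iff.rfl

theorem mem_inf : z ∈ (X ⊓ Y).1 ↔ z ∈ X.1 ∧ z ∈ Y.1 := by
  refine ⟨fun h => ⟨le_iff_subset.1 inf_le_left h, le_iff_subset.1 inf_le_right h⟩, fun h => ?_⟩
  have : mk' (X.1 ∩ Y.1) (X.2.inter Y.2) ≤ X ⊓ Y :=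
    le_inf (le_iff_subset.2 Set.inter_subset_left) (le_iff_subset.2 Set.inter_subset_right)
  exact this h

theorem mem_sup_iff : z ∈ (X ⊔ Y).1 ↔ ∃ a ∈ X.1 ∪ Y.1, ∃ b ∈ X.1 ∪ Y.1, a ≤ z ∧ z ≤ b := by
  constructor
  · let H := mk' {z | ∃ a ∈ X.1 ∪ Y.1, ∃ b ∈ X.1 ∪ Y.1, a ≤ z ∧ z ≤ b}
      ⟨fun _ ⟨a, ha, _, _, haz, _⟩ _ ⟨_, _, b, hb, _, hzb⟩ _ hz =>
        ⟨a, ha, b, hb, haz.trans hz.1, hz.2.trans hzb⟩⟩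
    have hX : X ≤ H := fun a ha => ⟨a, .inl ha, a, .inl ha, le_rfl, le_rfl⟩
    have hY : Y ≤ H := fun a ha => ⟨a, .inr ha, a, .inr ha, le_rfl, le_rfl⟩
    exact fun hz => sup_le hX hY hz
  · rintro ⟨a, ha, b, hb, haz, hzb⟩
    have hXY : X.1 ∪ Y.1 ⊆ (X ⊔ Y).1 :=
      Set.union_subset (le_iff_subset.1 le_sup_left) (le_iff_subset.1 le_sup_right)
    exact (X ⊔ Y).2.out (hXY ha) (hXY hb) ⟨haz, hzb⟩

theorem mem_sup_cases (h : z ∈ (X ⊔ Y).1) :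
    z ∈ X.1 ∨ z ∈ Y.1 ∨ ∃ a ∈ X.1, ∃ b ∈ Y.1, a < z ∧ z < b ∨ b < z ∧ z < a := by
  obtain ⟨a, ha, b, hb, haz, hzb⟩ := mem_sup_iff.1 h
  rcases haz.eq_or_lt with rfl | haz
  · exact ha.elim .inl (.inr ∘ .inl)
  rcases hzb.eq_or_lt with rfl | hzb
  · exact hb.elim .inl (.inr ∘ .inl)
  rcases ha with ha | ha <;> rcases hb with hb | hb
  · exact .inl (X.2.out ha hb ⟨haz.le, hzb.le⟩)
  · exact .inr (.inr ⟨a, ha, b, hb, .inl ⟨haz, hzb⟩⟩)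
  · exact .inr (.inr ⟨b, hb, a, ha, .inr ⟨haz, hzb⟩⟩)
  · exact .inr (.inl (Y.2.out ha hb ⟨haz.le, hzb.le⟩))

theorem mem_sup_of_rel {r : P → P → Prop} (hr : r = (· < ·) ∨ r = (· > ·)) (ha : a ∈ X.1)
    (hb : b ∈ Y.1) (haz : r a z) (hzb : r z b) : z ∈ (X ⊔ Y).1 := by
  rcases hr with rfl | rfl
  · exact mem_sup_iff.2 ⟨a, .inl ha, b, .inr hb, haz.le, hzb.le⟩
  · exact mem_sup_iff.2 ⟨b, .inr hb, a, .inl ha, hzb.le, haz.le⟩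

theorem coe_bot : (⊥ : Co P).1 = ∅ :=
  Set.subset_empty_iff.1 (le_iff_subset.1 (bot_le (a := emp)))

theorem sngl_inf_sngl (h : a ≠ b) : sngl a ⊓ sngl b = ⊥ :=
  le_bot_iff.1 fun _ hz => (h ((mem_inf.1 hz).1.symm.trans (mem_inf.1 hz).2)).elim

theorem sngl_le_sup_sngl (hab : a ≤ b) (hbc : b ≤ c) : sngl b ≤ sngl a ⊔ sngl c := by
  rintro z rfl
  exact mem_sup_iff.2 ⟨a, .inl rfl, c, .inr rfl, hab, hbc⟩

theorem sngl_ne_bot : sngl a ≠ ⊥ := by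
  intro h
  have ha : a ∈ (sngl a : Co P).1 := rfl
  rw [h, coe_bot] at ha
  exact ha

variable {x x' : ℕ → Co P} {n i : ℕ}

theorem mem_Upoly_cases (hi : i < n) (hz : z ∈ (Upoly x x' n i).1) :
    z ∈ (Vpoly x x' n i i).1 ∨ ∃ v ∈ (Upoly x x' n (i + 1)).1, ∃ c ∈ (x' (i + 1)).1,
      v < z ∧ z < c ∨ c < z ∧ z < v := by
  rw [Upoly_of_lt hi, mem_inf] at hz
  rw [Vpoly_self]
  rcases mem_sup_cases hz.2 with h | h | h
  · exact .inl (le_iff_subset.1 le_sup_left (mem_inf.2 ⟨hz.1, h⟩))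
  · exact .inl (le_iff_subset.1 le_sup_right (mem_inf.2 ⟨hz.1, h⟩))
  · exact .inr h

theorem mem_Wpoly_self {r : P → P → Prop} (hr : r = (· < ·) ∨ r = (· > ·)) {w : P}
    (hw : w ∈ (x i).1) (hz : z ∈ (Upoly x x' n (i + 1)).1) (hb : b ∈ (x' (i + 1)).1)
    (hc : c ∈ (x' (i + 2)).1) (hcz : r c z) (hzw : r z w) (hwb : r w b) :
    w ∈ (Wpoly x x' n i i).1 := by
  have hcw : r c w := by
    rcases hr with rfl | rfl
    exacts [hcz.trans hzw, hzw.trans hcz]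
  rw [Wpoly_self, mem_inf, mem_inf]
  refine ⟨⟨hw, ?_⟩, mem_sup_of_rel hr (mem_inf.2 ⟨hz, ?_⟩) hb hzw hwb⟩
  · rw [sup_comm]
    exact mem_sup_of_rel hr hc hb hcw hwb
  · rw [sup_comm]
    exact mem_sup_of_rel hr hc hw hcz hzw

/-- `φ` is a rank function along `r`; the hypothesis `i < φ w` records the chain
`w r u_{i-1} r ⋯ r u₀ r b₁` of the walk that reached `w`. -/
theorem exists_mem_rhsTerms {r : P → P → Prop} (hr : r = (· < ·) ∨ r = (· > ·)) {φ : P → ℕ∞}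
    (hφ : ∀ {a b}, r a b → φ b < φ a) (hφn : ∀ a, φ a ≤ n) (i : ℕ) {w z b : P}
    (hw : w ∈ (x i).1) (hz : z ∈ (Upoly x x' n (i + 1)).1) (hb : b ∈ (x' (i + 1)).1)
    (hzw : r z w) (hwb : r w b) (hi : (i : ℕ∞) < φ w) :
    ∃ t ∈ rhsTerms x x' n i, w ∈ t.1 := by
  have hiz : ((i + 1 : ℕ) : ℕ∞) < φ z := by
    push_cast
    exact (Order.add_one_le_of_lt hi).trans_lt (hφ hzw)
  have hin : i + 1 < n := by exact_mod_cast hiz.trans_le (hφn z)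
  suffices h : (∃ t ∈ rhsTerms x x' n (i + 1), z ∈ t.1) ∨ w ∈ (Wpoly x x' n i i).1 by
    rcases h with ⟨t, ht, hzt⟩ | hW
    · exact ⟨_, inf_sup_mem_rhsTerms ht, mem_inf.2 ⟨hw, mem_sup_of_rel hr hzt hb hzw hwb⟩⟩
    · exact ⟨_, Wpoly_self_mem_rhsTerms (by omega), hW⟩
  rcases mem_Upoly_cases hin hz with hV | ⟨v, hv, c, hc, hvzc⟩
  · exact .inl ⟨_, Vpoly_self_mem_rhsTerms hin, hV⟩
  have hdir : r v z ∧ r z c ∨ r c z ∧ r z v := by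
    rcases hr with rfl | rfl
    · exact hvzc
    · exact hvzc.symm.imp And.symm And.symm
  rcases hdir with ⟨hvz, hzc⟩ | ⟨hcz, -⟩
  · have hz' : z ∈ (x (i + 1)).1 := le_iff_subset.1 (Upoly_le hin.le) hz
    exact .inl (exists_mem_rhsTerms hr hφ hφn (i + 1) hz' hv hc hvz hzc hiz)
  · exact .inr (mem_Wpoly_self hr hw hz hb hc hcz hzw hwb)
termination_by n - i

theorem Upoly_le_rhsH (hn : 0 < n) (hP : lengthLE P n) (x x' : ℕ → Co P) :
    Upoly x x' n 0 ≤ rhsH x x' n := by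
  intro a ha
  suffices h : ∃ t ∈ rhsTerms x x' n 0, a ∈ t.1 by
    obtain ⟨t, ht, hat⟩ := h
    exact (isLUB_rhsTerms hn).1 ht hat
  have ha₀ : a ∈ (x 0).1 := le_iff_subset.1 (Upoly_le n.zero_le) ha
  rcases mem_Upoly_cases hn ha with hV | ⟨v, hv, c, hc, ⟨hva, hac⟩ | ⟨hca, hav⟩⟩
  · exact ⟨_, Vpoly_self_mem_rhsTerms hn, hV⟩
  · refine exists_mem_rhsTerms (.inl rfl) (fun hab => hP.coheight_strictAnti hab)
      hP.coheight_le 0 ha₀ hv hc hva hac ?_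
    simpa using pos_of_gt (hP.coheight_strictAnti hac)
  · refine exists_mem_rhsTerms (.inr rfl) (fun hab => hP.height_strictMono hab)
      hP.height_le 0 ha₀ hv hc hav hca ?_
    simpa using pos_of_gt (hP.height_strictMono hca)

theorem not_IdH_of_lt_length (hn : 0 < n) (p : LTSeries P) (hp : n < p.length) :
    ¬ IdH n (Co P) := by
  let q : ℕ → P := fun j => p ⟨n - j, by omega⟩
  have hq : ∀ j < n, q (j + 1) < q j := fun j hj => p.strictMono (Fin.mk_lt_mk.2 (by omega))
  have hqt : ∀ j ≤ n, q j < p.last := fun j _ => p.strictMono (Fin.mk_lt_mk.2 (by omega))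
  let x : ℕ → Co P := fun j => sngl (q j)
  let x' : ℕ → Co P := fun _ => sngl p.last
  intro hH
  have h : Upoly x x' n 0 = rhsH x x' n := hH x x'
  rw [Upoly_eq_self (x' := x') (fun j hj => sngl_le_sup_sngl (hq j hj).le (hqt j hj.le).le)
      n.zero_le,
    rhsH_eq_bot hn (fun j hj => sngl_inf_sngl (hq j hj).ne')
      (fun j hj => by rw [sup_idem]; exact sngl_inf_sngl (hqt j hj.le).ne)] at h
  exact sngl_ne_bot h

end Co

theorem stmt18 (P : Type*) [PartialOrder P] (n : ℕ) (hn : 0 < n) :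
    IdH n (Co P) ↔ lengthLE P n := by
  refine ⟨fun hH => lengthLE_iff.2 fun p => ?_, fun hP x x' => ?_⟩
  · by_contra! hp
    exact Co.not_IdH_of_lt_length hn p hp hH
  · exact le_antisymm (Co.Upoly_le_rhsH hn hP x x') (rhsH_le_Upoly hn)
end
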